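/- arXiv:1908.10389 — 3 statements merged into one kernel-verified Lean document; each statement's English description precedes it below -/
import Mathlib

section
/- Let a, b, c, d lie in positive order on the unit circle, with a + c ≠ 0, b + d ≠ 0 and ac ≠ bd, and set w2 := (ac(b+d) − bd(a+c))/(ac − bd). Let w ∈ ℂ with |w| < 1 satisfy |w − 2ac/(a+c)| = |a − 2ac/(a+c)| and |w − 2bd/(b+d)| = |b − 2bd/(b+d)| (w is the point of intersection of the hyperbolic lines J*[a,c] and J*[b,d]). Then w2 = 2w/(1 + |w|²), |w2| < 1, and w is the hyperbolic midpoint of the segment from 0 to w2: ρ(0,w) = ρ(w,w2) = ρ(0,w2)/2. -/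
/-!
With `conj a = a⁻¹` on the unit circle, `‖w - 2ac/(a+c)‖ = ‖a - 2ac/(a+c)‖` becomes the equation
`2 (w + ac·conj w) = (1 + |w|²)(a + c)`, linear in `w` and `conj w`; eliminating `conj w` between
the two such equations gives `w2 (1 + |w|²) = 2w`. The map `w ↦ 2w/(1 + |w|²)` doubles the
hyperbolic distance from `0` along the ray through `w`: with `r = |w|` and `x = r/√(1 - r²)`,
`ρ(0,w) = 2 arsinh x`, `ρ(0,w2) = 2 arsinh (2r/(1 - r²)) = 2 arsinh (2x√(1 + x²)) = 4 arsinh x`,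
and `|w - w2| / √((1 - |w|²)(1 - |w2|²))` is again `x`.
-/

open Complex

/-- Points `a, b, c, d` lie in positive order on the unit circle. -/
def PosOrderOnCircle (a b c d : ℂ) : Prop :=
  ∃ θ₁ θ₂ θ₃ θ₄ : ℝ, θ₁ < θ₂ ∧ θ₂ < θ₃ ∧ θ₃ < θ₄ ∧ θ₄ < θ₁ + 2 * Real.pi ∧
    a = Complex.exp (θ₁ * Complex.I) ∧ b = Complex.exp (θ₂ * Complex.I) ∧
    c = Complex.exp (θ₃ * Complex.I) ∧ d = Complex.exp (θ₄ * Complex.I)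

/-- The hyperbolic distance in the unit disk. -/
noncomputable def hypDist (x y : ℂ) : ℝ :=
  2 * Real.arsinh (‖x - y‖ /
    Real.sqrt ((1 - ‖x‖ ^ 2) * (1 - ‖y‖ ^ 2)))

open ComplexConjugate

lemma Real.arsinh_two_mul_mul_sqrt (x : ℝ) :
    Real.arsinh (2 * x * √(1 + x ^ 2)) = 2 * Real.arsinh x := by
  rw [← Real.arsinh_sinh (2 * Real.arsinh x), Real.sinh_two_mul, Real.sinh_arsinh,
    Real.cosh_arsinh]

lemma hypDist_zero_left (x : ℂ) :
    hypDist 0 x = 2 * Real.arsinh (‖x‖ / √(1 - ‖x‖ ^ 2)) := by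
  simp [hypDist]

lemma two_mul_add_mul_conj_eq_of_norm_sub_eq {a c w : ℂ} (ha : ‖a‖ = 1) (hc : ‖c‖ = 1)
    (hac : a + c ≠ 0) (h : ‖w - 2 * a * c / (a + c)‖ = ‖a - 2 * a * c / (a + c)‖) :
    2 * (w + a * c * conj w) = (1 + w * conj w) * (a + c) := by
  have ha0 : a ≠ 0 := norm_ne_zero_iff.mp (by simp [ha])
  have hc0 : c ≠ 0 := norm_ne_zero_iff.mp (by simp [hc])
  have hsq : (w - 2 * a * c / (a + c)) * conj (w - 2 * a * c / (a + c))
      = (a - 2 * a * c / (a + c)) * conj (a - 2 * a * c / (a + c)) := by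
    rw [mul_conj, mul_conj, ← Complex.sq_norm, ← Complex.sq_norm, h]
  simp only [map_sub, map_div₀, map_mul, map_add, map_ofNat, ← inv_eq_conj ha,
    ← inv_eq_conj hc] at hsq
  have hca : c + a ≠ 0 := by rwa [add_comm]
  field_simp at hsq
  refine mul_left_cancel₀ hac ?_
  linear_combination -hsq

noncomputable def diskDouble (w : ℂ) : ℂ := 2 * w / ((1 + ‖w‖ ^ 2 : ℝ) : ℂ)

lemma norm_diskDouble (w : ℂ) : ‖diskDouble w‖ = 2 * ‖w‖ / (1 + ‖w‖ ^ 2) := by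
  rw [diskDouble, norm_div, norm_mul, Complex.norm_real, Real.norm_of_nonneg (by positivity),
    Complex.norm_two]

lemma norm_diskDouble_lt_one {w : ℂ} (hw : ‖w‖ ≠ 1) : ‖diskDouble w‖ < 1 := by
  have : 0 < (1 - ‖w‖) ^ 2 := by positivity [sub_ne_zero.mpr hw.symm]
  rw [norm_diskDouble, div_lt_one (by positivity)]
  linarith

lemma one_sub_norm_diskDouble_sq (w : ℂ) :
    1 - ‖diskDouble w‖ ^ 2 = ((1 - ‖w‖ ^ 2) / (1 + ‖w‖ ^ 2)) ^ 2 := by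
  rw [norm_diskDouble]
  field_simp
  ring

lemma norm_sub_diskDouble (w : ℂ) :
    ‖w - diskDouble w‖ = ‖w‖ * |1 - ‖w‖ ^ 2| / (1 + ‖w‖ ^ 2) := by
  have hs : (0 : ℝ) < 1 + ‖w‖ ^ 2 := by positivity
  have : w - diskDouble w = (((‖w‖ ^ 2 - 1) / (1 + ‖w‖ ^ 2) : ℝ) : ℂ) * w := by
    have hsC : (1 + (‖w‖ : ℂ) ^ 2) ≠ 0 := by exact_mod_cast hs.ne'
    rw [diskDouble]
    push_cast
    field_simp
    ring
  rw [this, norm_mul, Complex.norm_real, Real.norm_eq_abs, abs_div, abs_of_pos hs, abs_sub_comm]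
  ring

lemma hypDist_zero_diskDouble {w : ℂ} (hw : ‖w‖ < 1) :
    hypDist 0 (diskDouble w) = 2 * hypDist 0 w := by
  have hq : 0 < 1 - ‖w‖ ^ 2 := by nlinarith [norm_nonneg w]
  rw [hypDist_zero_left, hypDist_zero_left, one_sub_norm_diskDouble_sq,
    Real.sqrt_sq (by positivity), norm_diskDouble,
    ← Real.arsinh_two_mul_mul_sqrt (‖w‖ / √(1 - ‖w‖ ^ 2))]
  set r := ‖w‖
  have hsqrt : √(1 + (r / √(1 - r ^ 2)) ^ 2) = 1 / √(1 - r ^ 2) := by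
    rw [one_div, ← Real.sqrt_inv]
    congr 1
    field_simp
    rw [Real.sq_sqrt hq.le]
    ring
  rw [hsqrt]
  congr 2
  field_simp
  rw [Real.sq_sqrt hq.le]

lemma hypDist_diskDouble {w : ℂ} (hw : ‖w‖ < 1) : hypDist w (diskDouble w) = hypDist 0 w := by
  have hq : 0 < 1 - ‖w‖ ^ 2 := by nlinarith [norm_nonneg w]
  rw [hypDist, hypDist_zero_left, norm_sub_diskDouble, one_sub_norm_diskDouble_sq,
    Real.sqrt_mul hq.le, Real.sqrt_sq (by positivity), abs_of_pos hq]
  have : √(1 - ‖w‖ ^ 2) ≠ 0 := (Real.sqrt_pos.mpr hq).ne'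
  congr 2
  field_simp

lemma lineIntersection_eq_diskDouble {a b c d w : ℂ} (ha : ‖a‖ = 1) (hb : ‖b‖ = 1)
    (hc : ‖c‖ = 1) (hd : ‖d‖ = 1) (hac : a + c ≠ 0) (hbd : b + d ≠ 0) (h2 : a * c ≠ b * d)
    (hw1 : ‖w - 2 * a * c / (a + c)‖ = ‖a - 2 * a * c / (a + c)‖)
    (hw2 : ‖w - 2 * b * d / (b + d)‖ = ‖b - 2 * b * d / (b + d)‖) :
    (a * c * (b + d) - b * d * (a + c)) / (a * c - b * d) = diskDouble w := by
  have e1 := two_mul_add_mul_conj_eq_of_norm_sub_eq ha hc hac hw1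
  have e2 := two_mul_add_mul_conj_eq_of_norm_sub_eq hb hd hbd hw2
  have hwc : w * conj w = (‖w‖ : ℂ) ^ 2 := by rw [mul_conj, ← Complex.sq_norm]; push_cast; ring
  have hs : ((1 + ‖w‖ ^ 2 : ℝ) : ℂ) ≠ 0 := by
    exact_mod_cast (by positivity : (0 : ℝ) < 1 + ‖w‖ ^ 2).ne'
  rw [diskDouble, div_eq_div_iff (sub_ne_zero.mpr h2) hs]
  push_cast
  linear_combination b * d * e1 - a * c * e2 + (b * d * (a + c) - a * c * (b + d)) * hwc

lemma PosOrderOnCircle.norm_eq_one {a b c d : ℂ} (h : PosOrderOnCircle a b c d) :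
    ‖a‖ = 1 ∧ ‖b‖ = 1 ∧ ‖c‖ = 1 ∧ ‖d‖ = 1 := by
  obtain ⟨_, _, _, _, -, -, -, -, rfl, rfl, rfl, rfl⟩ := h
  simp [Complex.norm_exp]

/-- The intersection point `w` of the hyperbolic lines `J*[a,c]` and `J*[b,d]`
satisfies `w2 = 2w/(1 + |w|²)` and is the hyperbolic midpoint of the segment from
`0` to `w2 = LIS[a,c,b,d]`. -/
theorem w_is_hyperbolic_midpoint (a b c d w : ℂ)
    (hord : PosOrderOnCircle a b c d)
    (hac : a + c ≠ 0) (hbd : b + d ≠ 0) (h2 : a * c ≠ b * d)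
    (hw : ‖w‖ < 1)
    (hw1 : ‖w - 2 * a * c / (a + c)‖ = ‖a - 2 * a * c / (a + c)‖)
    (hw2 : ‖w - 2 * b * d / (b + d)‖ = ‖b - 2 * b * d / (b + d)‖) :
    let w2 := (a * c * (b + d) - b * d * (a + c)) / (a * c - b * d)
    w2 = 2 * w / (((1 + ‖w‖ ^ 2 : ℝ)) : ℂ) ∧
    ‖w2‖ < 1 ∧
    hypDist 0 w = hypDist w w2 ∧ hypDist 0 w = hypDist 0 w2 / 2 := by
  intro w2
  obtain ⟨ha, hb, hc, hd⟩ := hord.norm_eq_one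
  have hdouble : w2 = diskDouble w :=
    lineIntersection_eq_diskDouble ha hb hc hd hac hbd h2 hw1 hw2
  refine ⟨hdouble, ?_, ?_, ?_⟩
  · rw [hdouble]; exact norm_diskDouble_lt_one hw.ne
  · rw [hdouble, hypDist_diskDouble hw]
  · rw [hdouble, hypDist_zero_diskDouble hw]; ring
end

section
/- Let a, b, c, d lie in positive order on the unit circle. Set d1 := 2·artanh(√((|a−b|·|c−d|)/(|a−c|·|b−d|))) and d2 := 2·artanh(√((|a−d|·|b−c|)/(|a−c|·|b−d|))). Then d1 + d2 ≥ 4·log(√2 + 1), with equality if and only if the absolute cross ratio (|a−c|·|b−d|)/(|a−b|·|c−d|) equals 2. -/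
open Complex

/-- The inverse hyperbolic tangent. -/
noncomputable def artanh (x : ℝ) : ℝ := Real.log ((1 + x) / (1 - x)) / 2

/-!
By Ptolemy's theorem, `|a - b| |c - d| + |a - d| |b - c| = |a - c| |b - d|`, so the arguments
`u, v` of the two `artanh`s satisfy `u² + v² = 1`. For such `u, v` the addition formula gives
`artanh u + artanh v = log ((s + 1) / (s - 1))` with `s = u + v`, which decreases in `s`; and
`s ≤ √2` with equality iff `u = v`, i.e. iff the cross ratio `1 / u²` equals `2`.
-/

lemma norm_exp_mul_I_sub_exp_mul_I (α β : ℝ) :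
    ‖exp (α * I) - exp (β * I)‖ = 2 * |Real.sin ((β - α) / 2)| := by
  have hsplit : exp (β * I) = exp (α * I) * exp (I * ↑(β - α)) := by
    rw [← Complex.exp_add]; push_cast; ring_nf
  rw [hsplit, ← mul_one_sub, norm_mul, norm_exp_ofReal_mul_I, one_mul, norm_sub_rev,
    norm_exp_I_mul_ofReal_sub_one, norm_mul, Real.norm_eq_abs, Real.norm_eq_abs, abs_two]

lemma norm_exp_mul_I_sub_exp_mul_I_of_lt {α β : ℝ} (h : α < β) (h' : β < α + 2 * Real.pi) :
    ‖exp (α * I) - exp (β * I)‖ = 2 * Real.sin ((β - α) / 2) := by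
  rw [norm_exp_mul_I_sub_exp_mul_I, abs_of_pos]
  exact Real.sin_pos_of_pos_of_lt_pi (by linarith) (by linarith)

lemma Real.sin_add_mul_sin_add (x y z : ℝ) :
    Real.sin (x + y) * Real.sin (y + z) =
      Real.sin x * Real.sin z + Real.sin y * Real.sin (x + y + z) := by
  simp only [Real.sin_add, Real.cos_add]
  linear_combination (Real.sin x * Real.sin z) * Real.sin_sq_add_cos_sq y

namespace PosOrderOnCircle

variable {a b c d : ℂ}

theorem ptolemy (h : PosOrderOnCircle a b c d) :
    ‖a - b‖ * ‖c - d‖ + ‖a - d‖ * ‖b - c‖ = ‖a - c‖ * ‖b - d‖ := by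
  obtain ⟨θ₁, θ₂, θ₃, θ₄, h12, h23, h34, h41, rfl, rfl, rfl, rfl⟩ := h
  have hπ := Real.pi_pos
  rw [norm_exp_mul_I_sub_exp_mul_I_of_lt h12 (by linarith),
    norm_exp_mul_I_sub_exp_mul_I_of_lt h34 (by linarith),
    norm_exp_mul_I_sub_exp_mul_I_of_lt (by linarith : θ₁ < θ₄) h41,
    norm_exp_mul_I_sub_exp_mul_I_of_lt h23 (by linarith),
    norm_exp_mul_I_sub_exp_mul_I_of_lt (by linarith : θ₁ < θ₃) (by linarith),
    norm_exp_mul_I_sub_exp_mul_I_of_lt (by linarith : θ₂ < θ₄) (by linarith)]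
  have := Real.sin_add_mul_sin_add ((θ₂ - θ₁) / 2) ((θ₃ - θ₂) / 2) ((θ₄ - θ₃) / 2)
  ring_nf at this ⊢
  linear_combination -4 * this

theorem norm_mul_norm_pos (h : PosOrderOnCircle a b c d) :
    0 < ‖a - b‖ * ‖c - d‖ ∧ 0 < ‖a - d‖ * ‖b - c‖ := by
  obtain ⟨θ₁, θ₂, θ₃, θ₄, h12, h23, h34, h41, rfl, rfl, rfl, rfl⟩ := h
  have hπ := Real.pi_pos
  rw [norm_exp_mul_I_sub_exp_mul_I_of_lt h12 (by linarith),
    norm_exp_mul_I_sub_exp_mul_I_of_lt h34 (by linarith),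
    norm_exp_mul_I_sub_exp_mul_I_of_lt (by linarith : θ₁ < θ₄) h41,
    norm_exp_mul_I_sub_exp_mul_I_of_lt h23 (by linarith)]
  refine ⟨mul_pos ?_ ?_, mul_pos ?_ ?_⟩ <;>
    exact mul_pos two_pos (Real.sin_pos_of_pos_of_lt_pi (by linarith) (by linarith))

end PosOrderOnCircle

lemma artanh_add_artanh_of_sq_add_sq_eq_one {u v : ℝ} (hu : 0 < u) (hv : 0 < v)
    (h : u ^ 2 + v ^ 2 = 1) :
    artanh u + artanh v = Real.log ((u + v + 1) / (u + v - 1)) := by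
  have hu1 : u < 1 := by nlinarith
  have hv1 : v < 1 := by nlinarith
  have hs : 1 < u + v := by nlinarith
  have hprod : (1 + u) / (1 - u) * ((1 + v) / (1 - v)) = ((u + v + 1) / (u + v - 1)) ^ 2 := by
    rw [div_mul_div_comm, div_pow, div_eq_div_iff (by nlinarith) (by positivity)]
    linear_combination 2 * (u + v) * h
  unfold artanh
  rw [← add_div, ← Real.log_mul (by positivity) (by positivity), hprod, Real.log_pow]
  ring

lemma strictAntiOn_log_add_one_div_sub_one :
    StrictAntiOn (fun s : ℝ => Real.log ((s + 1) / (s - 1))) (Set.Ioi 1) := by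
  intro s (hs : 1 < s) t (ht : 1 < t) hst
  apply Real.log_lt_log (div_pos (by linarith) (by linarith))
  rw [div_lt_div_iff₀ (by linarith) (by linarith)]
  nlinarith

lemma two_mul_log_sqrt_two_add_one :
    2 * Real.log (√2 + 1) = Real.log ((√2 + 1) / (√2 - 1)) := by
  have h2 : √2 ^ 2 = 2 := Real.sq_sqrt zero_le_two
  have h1 : 1 < √2 := by nlinarith [Real.sqrt_nonneg 2]
  have hsq : (√2 + 1) / (√2 - 1) = (√2 + 1) ^ 2 := by
    rw [div_eq_iff (by linarith)]
    linear_combination -(√2 + 1) * h2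
  rw [hsq, Real.log_pow, Nat.cast_ofNat]

lemma add_le_sqrt_two_of_sq_add_sq_eq_one {u v : ℝ} (h : u ^ 2 + v ^ 2 = 1) : u + v ≤ √2 :=
  Real.le_sqrt_of_sq_le (by nlinarith [sq_nonneg (u - v)])

lemma add_eq_sqrt_two_iff_of_sq_add_sq_eq_one {u v : ℝ} (hu : 0 ≤ u) (hv : 0 ≤ v)
    (h : u ^ 2 + v ^ 2 = 1) : u + v = √2 ↔ u = v := by
  have hdiff : (u - v) ^ 2 = 2 - (u + v) ^ 2 := by linear_combination 2 * h
  rw [eq_comm, Real.sqrt_eq_iff_eq_sq zero_le_two (by positivity), ← sub_eq_zero (a := u),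
    ← pow_eq_zero_iff two_ne_zero, hdiff, sub_eq_zero]

theorem two_mul_artanh_add_two_mul_artanh_ge_of_sq_add_sq {u v : ℝ} (hu : 0 < u) (hv : 0 < v)
    (h : u ^ 2 + v ^ 2 = 1) :
    2 * artanh u + 2 * artanh v ≥ 4 * Real.log (√2 + 1) ∧
      (2 * artanh u + 2 * artanh v = 4 * Real.log (√2 + 1) ↔ u = v) := by
  have hsum : 2 * artanh u + 2 * artanh v = 2 * Real.log ((u + v + 1) / (u + v - 1)) := by
    rw [← mul_add, artanh_add_artanh_of_sq_add_sq_eq_one hu hv h]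
  have hbound : 4 * Real.log (√2 + 1) = 2 * Real.log ((√2 + 1) / (√2 - 1)) := by
    rw [← two_mul_log_sqrt_two_add_one]; ring
  have hs : u + v ∈ Set.Ioi (1 : ℝ) := show 1 < u + v by nlinarith
  have hsqrt : √2 ∈ Set.Ioi (1 : ℝ) :=
    show 1 < √2 by rw [Real.lt_sqrt zero_le_one]; norm_num
  have hanti := strictAntiOn_log_add_one_div_sub_one
  rw [hsum, hbound, ge_iff_le, mul_le_mul_iff_of_pos_left two_pos,
    mul_right_inj' two_ne_zero, hanti.le_iff_ge hsqrt hs, hanti.injOn.eq_iff hs hsqrt]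
  exact ⟨add_le_sqrt_two_of_sq_add_sq_eq_one h,
    add_eq_sqrt_two_iff_of_sq_add_sq_eq_one hu.le hv.le h⟩

theorem two_mul_artanh_sqrt_div_add_ge {A B C : ℝ} (hA : 0 < A) (hB : 0 < B) (hC : A + B = C) :
    2 * artanh √(A / C) + 2 * artanh √(B / C) ≥ 4 * Real.log (√2 + 1) ∧
      (2 * artanh √(A / C) + 2 * artanh √(B / C) = 4 * Real.log (√2 + 1) ↔ C / A = 2) := by
  have hC0 : 0 < C := hC ▸ add_pos hA hB
  have hsq : √(A / C) ^ 2 + √(B / C) ^ 2 = 1 := by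
    rw [Real.sq_sqrt (by positivity), Real.sq_sqrt (by positivity), ← add_div, hC,
      div_self hC0.ne']
  refine (two_mul_artanh_add_two_mul_artanh_ge_of_sq_add_sq (by positivity) (by positivity)
    hsq).imp_right fun h ↦ h.trans ?_
  rw [Real.sqrt_inj (by positivity) (by positivity), div_left_inj' hC0.ne',
    div_eq_iff hA.ne', ← hC]
  constructor <;> intro h <;> linarith

/-- The sum of the hyperbolic distances between the two pairs of opposite sides
of an ideal hyperbolic quadrilateral is at least `4 log(√2 + 1)`, with equality iff
the absolute cross ratio equals `2`. -/
theorem sum_of_distances_ge (a b c d : ℂ)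
    (hord : PosOrderOnCircle a b c d) :
    let d1 := 2 * artanh (Real.sqrt
      ((‖a - b‖ * ‖c - d‖) /
        (‖a - c‖ * ‖b - d‖)))
    let d2 := 2 * artanh (Real.sqrt
      ((‖a - d‖ * ‖b - c‖) /
        (‖a - c‖ * ‖b - d‖)))
    d1 + d2 ≥ 4 * Real.log (Real.sqrt 2 + 1) ∧
    (d1 + d2 = 4 * Real.log (Real.sqrt 2 + 1) ↔
      (‖a - c‖ * ‖b - d‖) /
        (‖a - b‖ * ‖c - d‖) = 2) := by
  obtain ⟨hA, hB⟩ := hord.norm_mul_norm_pos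
  exact two_mul_artanh_sqrt_div_add_ge hA hB hord.ptolemy
end

section
/- Let a, b, c, d lie in positive order on the unit circle with ab ≠ cd, ad ≠ bc and ac ≠ bd. Set w1 := (ab(c+d) − cd(a+b))/(ab − cd), w3 := (ad(b+c) − bc(a+d))/(ad − bc), w2 := (ac(b+d) − bd(a+c))/(ac − bd), and assume |w2| < 1. Let t1, t3 ∈ ℂ with |t1| < 1, |t3| < 1 be collinear with w3, w2 and lying on the lines through a,b and through c,d respectively, and let t2, t4 ∈ ℂ with |t2| < 1, |t4| < 1 be collinear with w1, w2 and lying on the lines through b,c and through a,d respectively (collinearity over ℝ, viewing ℂ as the real plane). Then ρ(w2,t1) = ρ(w2,t3) and ρ(w2,t2) = ρ(w2,t4). -/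
open Complex

/-!
For points on the unit circle conjugation is inversion, so every point and line of the
configuration has a rational description in `a, b, c, d`. The line through two diagonal points
of the complete quadrangle `abcd` is the polar of the third one. Cutting it with a chord `xy`
gives an explicit point `t`, and for the diagonal point `w` on that line the quantity
`|w - t|² / (1 - |t|²)`, which determines `ρ(w, t)`, turns out to be a rational function of the
four points that is invariant under exchanging the chords `xy` and `zu`; this exchange swaps
`t1 ↔ t3` (resp. `t2 ↔ t4`). Positive order on the circle keeps the chords from being parallel
to the polar.
-/

open ComplexConjugate

/-- For `x, y, z, u` on the unit circle, the intersection of the lines `xy` and `zu`. -/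
noncomputable def chordMeet (x y z u : ℂ) : ℂ :=
  (x * y * (z + u) - z * u * (x + y)) / (x * y - z * u)

/-- `p` lies on the polar of `q` with respect to the unit circle, i.e. `Re (p * conj q) = 1`. -/
def OnPolar (q p : ℂ) : Prop :=
  conj q * p + q * conj p = 2

lemma chordMeet_comm (x y z u : ℂ) : chordMeet z u x y = chordMeet x y z u := by
  rw [chordMeet, chordMeet, ← neg_div_neg_eq]
  ring

lemma chordMeet_swap_left (x y z u : ℂ) : chordMeet y x z u = chordMeet x y z u := by
  simp only [chordMeet, mul_comm y x, add_comm y x]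

lemma chordMeet_swap_right (x y z u : ℂ) : chordMeet x y u z = chordMeet x y z u := by
  simp only [chordMeet, mul_comm u z, add_comm u z]

lemma mul_add_mul_conj_eq_of_collinear {A B C v w p : ℂ} (hvw : v ≠ w)
    (hcol : Collinear ℝ ({v, w, p} : Set ℂ))
    (hv : A * v + B * conj v = C) (hw : A * w + B * conj w = C) :
    A * p + B * conj p = C := by
  obtain ⟨r, rfl⟩ := mem_affineSpan_pair_iff_exists_lineMap_eq.1 <|
    hcol.mem_affineSpan_of_mem_of_ne (p₁ := v) (p₂ := w) (p₃ := p)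
      (by simp) (by simp) (by simp) hvw
  simp only [AffineMap.lineMap_apply_module, Complex.real_smul, map_add, map_mul,
    Complex.conj_ofReal, map_sub, map_one, Complex.ofReal_sub, Complex.ofReal_one]
  linear_combination (1 - (r : ℂ)) * hv + r * hw

lemma OnPolar.of_collinear {q v w p : ℂ} (hv : OnPolar q v) (hvw : v ≠ w)
    (hcol : Collinear ℝ ({v, w, p} : Set ℂ)) (hw : OnPolar q w) : OnPolar q p :=
  mul_add_mul_conj_eq_of_collinear (A := conj q) (B := q) (C := 2) hvw hcol hv hw

section UnitCircle

variable {x y z u : ℂ}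

lemma ne_zero_of_norm_eq_one (hx : ‖x‖ = 1) : x ≠ 0 := by
  rintro rfl; simp at hx

lemma add_mul_conj_eq_of_collinear {t : ℂ} (hx : ‖x‖ = 1) (hy : ‖y‖ = 1) (hxy : x ≠ y)
    (hcol : Collinear ℝ ({x, y, t} : Set ℂ)) : t + x * y * conj t = x + y := by
  have hx0 := ne_zero_of_norm_eq_one hx
  have hy0 := ne_zero_of_norm_eq_one hy
  simpa using mul_add_mul_conj_eq_of_collinear (A := 1) (B := x * y) (C := x + y) hxy hcol
    (by rw [← inv_eq_conj hx]; field_simp)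
    (by rw [← inv_eq_conj hy]; field_simp; ring)

lemma conj_chordMeet (hx : ‖x‖ = 1) (hy : ‖y‖ = 1) (hz : ‖z‖ = 1) (hu : ‖u‖ = 1) :
    conj (chordMeet x y z u) = (x + y - z - u) / (x * y - z * u) := by
  by_cases h : x * y - z * u = 0
  · simp [chordMeet, h]
  have := ne_zero_of_norm_eq_one hx
  have := ne_zero_of_norm_eq_one hy
  have := ne_zero_of_norm_eq_one hz
  have := ne_zero_of_norm_eq_one hu
  have h' : x⁻¹ * y⁻¹ - z⁻¹ * u⁻¹ ≠ 0 := by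
    rw [show x⁻¹ * y⁻¹ - z⁻¹ * u⁻¹ = -(x * y - z * u) / (x * y * z * u) by field_simp; ring]
    exact div_ne_zero (neg_ne_zero.2 h) (by simp [*])
  simp only [chordMeet, map_div₀, map_sub, map_mul, map_add, ← inv_eq_conj hx,
    ← inv_eq_conj hy, ← inv_eq_conj hz, ← inv_eq_conj hu]
  rw [div_eq_div_iff h' h]
  field_simp
  ring

lemma onPolar_chordMeet (hx : ‖x‖ = 1) (hy : ‖y‖ = 1) (hz : ‖z‖ = 1) (hu : ‖u‖ = 1)
    (hxy_zu : x * y ≠ z * u) (hxz_yu : x * z ≠ y * u) :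
    OnPolar (chordMeet x y z u) (chordMeet x z y u) := by
  have h1 := sub_ne_zero_of_ne hxy_zu
  have h2 := sub_ne_zero_of_ne hxz_yu
  rw [OnPolar, conj_chordMeet hx hy hz hu, conj_chordMeet hx hz hy hu, chordMeet, chordMeet]
  field_simp
  ring

lemma chordMeet_ne_zero (hx : ‖x‖ = 1) (hy : ‖y‖ = 1) (hz : ‖z‖ = 1) (hu : ‖u‖ = 1)
    (hxy_zu : x * y ≠ z * u) (hxu_yz : x * u ≠ y * z) : chordMeet x y z u ≠ 0 := by
  intro h
  have hconj := conj_chordMeet hx hy hz hu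
  rw [h, map_zero, eq_comm, div_eq_zero_iff, or_iff_left (sub_ne_zero_of_ne hxy_zu)] at hconj
  rw [chordMeet, div_eq_zero_iff, or_iff_left (sub_ne_zero_of_ne hxy_zu)] at h
  have hsum : (x + y) * (x * y - z * u) = 0 := by linear_combination h + x * y * hconj
  have hxy : x + y = 0 := (mul_eq_zero.1 hsum).resolve_right (sub_ne_zero_of_ne hxy_zu)
  exact hxu_yz (by linear_combination (x - z) * hxy - x * hconj)

lemma chordMeet_ne_chordMeet (hxy : x ≠ y) (hzu : z ≠ u) (hP : chordMeet x y z u ≠ 0)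
    (hxu_yz : x * u ≠ y * z) (hxz_yu : x * z ≠ y * u) :
    chordMeet x u y z ≠ chordMeet x z y u := by
  intro h
  rw [chordMeet, chordMeet, div_eq_div_iff (sub_ne_zero_of_ne hxu_yz)
    (sub_ne_zero_of_ne hxz_yu)] at h
  have hK : (x - y) * (z - u) * (x * y * (z + u) - z * u * (x + y)) = 0 := by
    linear_combination -h
  simp only [mul_eq_zero, sub_eq_zero, hxy, hzu, false_or] at hK
  exact hP (by rw [chordMeet, sub_eq_zero.2 hK, zero_div])

lemma onPolar_of_collinear_chordMeet {p : ℂ} (hx : ‖x‖ = 1) (hy : ‖y‖ = 1) (hz : ‖z‖ = 1)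
    (hu : ‖u‖ = 1) (hxy : x ≠ y) (hzu : z ≠ u)
    (hxy_zu : x * y ≠ z * u) (hxz_yu : x * z ≠ y * u) (hxu_yz : x * u ≠ y * z)
    (hcol : Collinear ℝ ({chordMeet x u y z, chordMeet x z y u, p} : Set ℂ)) :
    OnPolar (chordMeet x y z u) p := by
  have hV : OnPolar (chordMeet x y z u) (chordMeet x u y z) := by
    simpa only [chordMeet_swap_right] using
      onPolar_chordMeet hx hy hu hz (by rwa [mul_comm u]) hxu_yz
  exact hV.of_collinear
    (chordMeet_ne_chordMeet hxy hzu (chordMeet_ne_zero hx hy hz hu hxy_zu hxu_yz) hxu_yz hxz_yu)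
    hcol (onPolar_chordMeet hx hy hz hu hxy_zu hxz_yu)

/-- The right-hand side is invariant under exchanging the chords `xy` and `zu`. -/
lemma normSq_chordMeet_sub_mul {t : ℂ} (hx : ‖x‖ = 1) (hy : ‖y‖ = 1) (hz : ‖z‖ = 1)
    (hu : ‖u‖ = 1) (hxy_zu : x * y ≠ z * u) (hxz_yu : x * z ≠ y * u)
    (hD : x * (y - z) * (y - u) + y * (x - z) * (x - u) ≠ 0)
    (hchord : t + x * y * conj t = x + y) (hpolar : OnPolar (chordMeet x y z u) t) :
    (normSq (chordMeet x z y u - t) : ℂ) * ((x * z - y * u) ^ 2 * ((x - z) * (y - u))) =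
      (x - u) * (y - z) * (x * y * (z + u) - z * u * (x + y)) * (x + y - z - u) *
        (1 - normSq t) := by
  have hx0 := ne_zero_of_norm_eq_one hx
  have hy0 := ne_zero_of_norm_eq_one hy
  have hP := sub_ne_zero_of_ne hxy_zu
  have hW := sub_ne_zero_of_ne hxz_yu
  have hconj_t : conj t = (x + y - t) / (x * y) := by
    rw [eq_div_iff (mul_ne_zero hx0 hy0)]; linear_combination hchord
  rw [OnPolar, conj_chordMeet hx hy hz hu, chordMeet, div_mul_eq_mul_div, div_mul_eq_mul_div,
    ← add_div, div_eq_iff hP] at hpolar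
  have ht : t = (2 * (x * y) * (x * y - z * u) - (x * y * (z + u) - z * u * (x + y)) * (x + y)) /
      (x * (y - z) * (y - u) + y * (x - z) * (x - u)) := by
    rw [eq_div_iff hD]
    linear_combination x * y * hpolar - (x * y * (z + u) - z * u * (x + y)) * hchord
  rw [← mul_conj, ← mul_conj, map_sub, conj_chordMeet hx hz hy hu, hconj_t, ht, chordMeet]
  field_simp
  ring

end UnitCircle

lemma exp_mul_I_ne_exp_mul_I {θ φ : ℝ} (h : θ < φ) (h' : φ < θ + 2 * Real.pi) :
    exp (θ * I) ≠ exp (φ * I) := fun heq =>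
  h.ne (Circle.exp_injOn_Ico (a := θ) (b := θ + 2 * Real.pi) (by linarith) ⟨le_rfl, by linarith⟩
    ⟨h.le, h'⟩ (Subtype.ext heq))

lemma exp_mul_I_sub_exp_mul_I (θ φ : ℝ) :
    exp (θ * I) - exp (φ * I) =
      2 * I * exp (((θ + φ) / 2 : ℝ) * I) * (Real.sin ((θ - φ) / 2) : ℂ) := by
  have hθ : exp (θ * I) = exp (((θ + φ) / 2 : ℝ) * I) * exp ((((θ - φ) / 2 : ℝ) : ℂ) * I) := by
    rw [← exp_add]; congr 1; push_cast; ring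
  have hφ : exp (φ * I) = exp (((θ + φ) / 2 : ℝ) * I) * exp (-(((θ - φ) / 2 : ℝ) : ℂ) * I) := by
    rw [← exp_add]; congr 1; push_cast; ring
  rw [ofReal_sin, Complex.sin, hθ, hφ]
  linear_combination (exp (((θ + φ) / 2 : ℝ) * I) *
    (exp ((((θ - φ) / 2 : ℝ) : ℂ) * I) - exp (-(((θ - φ) / 2 : ℝ) : ℂ) * I))) * I_sq

namespace PosOrderOnCircle

variable {a b c d : ℂ}

lemma rotate (h : PosOrderOnCircle a b c d) : PosOrderOnCircle b c d a := by
  obtain ⟨θ₁, θ₂, θ₃, θ₄, h₁₂, h₂₃, h₃₄, h₄₁, rfl, rfl, rfl, rfl⟩ := h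
  refine ⟨θ₂, θ₃, θ₄, θ₁ + 2 * Real.pi, h₂₃, h₃₄, by linarith, by linarith, rfl, rfl, rfl, ?_⟩
  push_cast
  exact (exp_mul_I_periodic (θ₁ : ℂ)).symm

lemma norm_eq_one_s17 (h : PosOrderOnCircle a b c d) : ‖a‖ = 1 ∧ ‖b‖ = 1 ∧ ‖c‖ = 1 ∧ ‖d‖ = 1 := by
  obtain ⟨θ₁, θ₂, θ₃, θ₄, -, -, -, -, rfl, rfl, rfl, rfl⟩ := h
  simp only [norm_exp_ofReal_mul_I, and_self]

lemma pairwise_ne (h : PosOrderOnCircle a b c d) :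
    a ≠ b ∧ a ≠ c ∧ a ≠ d ∧ b ≠ c ∧ b ≠ d ∧ c ≠ d := by
  obtain ⟨θ₁, θ₂, θ₃, θ₄, h₁₂, h₂₃, h₃₄, h₄₁, rfl, rfl, rfl, rfl⟩ := h
  refine ⟨?_, ?_, ?_, ?_, ?_, ?_⟩ <;> apply exp_mul_I_ne_exp_mul_I <;> linarith

lemma denom_ne_zero (h : PosOrderOnCircle a b c d) :
    a * (b - c) * (b - d) + b * (a - c) * (a - d) ≠ 0 := by
  obtain ⟨θ₁, θ₂, θ₃, θ₄, h₁₂, h₂₃, h₃₄, h₄₁, rfl, rfl, rfl, rfl⟩ := h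
  have hπ := Real.pi_pos
  set E := exp ((θ₁ + θ₂ + (θ₃ + θ₄) / 2 : ℝ) * I)
  have hE₁ : exp (θ₁ * I) * exp (((θ₂ + θ₃) / 2 : ℝ) * I) * exp (((θ₂ + θ₄) / 2 : ℝ) * I) = E := by
    simp only [E, ← exp_add]; congr 1; push_cast; ring
  have hE₂ : exp (θ₂ * I) * exp (((θ₁ + θ₃) / 2 : ℝ) * I) * exp (((θ₁ + θ₄) / 2 : ℝ) * I) = E := by
    simp only [E, ← exp_add]; congr 1; push_cast; ring
  set S := Real.sin ((θ₂ - θ₃) / 2) * Real.sin ((θ₂ - θ₄) / 2) +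
    Real.sin ((θ₁ - θ₃) / 2) * Real.sin ((θ₁ - θ₄) / 2)
  have hS : 0 < S := by
    have h₂₃ := Real.sin_neg_of_neg_of_neg_pi_lt (x := (θ₂ - θ₃) / 2) (by linarith) (by linarith)
    have h₂₄ := Real.sin_neg_of_neg_of_neg_pi_lt (x := (θ₂ - θ₄) / 2) (by linarith) (by linarith)
    have h₁₃ := Real.sin_neg_of_neg_of_neg_pi_lt (x := (θ₁ - θ₃) / 2) (by linarith) (by linarith)
    have h₁₄ := Real.sin_neg_of_neg_of_neg_pi_lt (x := (θ₁ - θ₄) / 2) (by linarith) (by linarith)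
    exact add_pos (mul_pos_of_neg_of_neg h₂₃ h₂₄) (mul_pos_of_neg_of_neg h₁₃ h₁₄)
  have hsum : exp (θ₁ * I) * (exp (θ₂ * I) - exp (θ₃ * I)) * (exp (θ₂ * I) - exp (θ₄ * I)) +
      exp (θ₂ * I) * (exp (θ₁ * I) - exp (θ₃ * I)) * (exp (θ₁ * I) - exp (θ₄ * I)) =
      -4 * E * S := by
    simp only [exp_mul_I_sub_exp_mul_I, S, ofReal_add, ofReal_mul]
    linear_combination
      4 * I ^ 2 * Real.sin ((θ₂ - θ₃) / 2) * Real.sin ((θ₂ - θ₄) / 2) * hE₁ +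
      4 * I ^ 2 * Real.sin ((θ₁ - θ₃) / 2) * Real.sin ((θ₁ - θ₄) / 2) * hE₂ +
      4 * E * (Real.sin ((θ₂ - θ₃) / 2) * Real.sin ((θ₂ - θ₄) / 2) +
        Real.sin ((θ₁ - θ₃) / 2) * Real.sin ((θ₁ - θ₄) / 2) : ℂ) * I_sq
  rw [hsum]
  exact mul_ne_zero (mul_ne_zero (by norm_num) (exp_ne_zero _)) (ofReal_ne_zero.2 hS.ne')

end PosOrderOnCircle

lemma hypDist_eq_hypDist {w t s : ℂ} (hw : ‖w‖ < 1) (ht : ‖t‖ < 1) (hs : ‖s‖ < 1)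
    (h : ‖w - t‖ ^ 2 * (1 - ‖s‖ ^ 2) = ‖w - s‖ ^ 2 * (1 - ‖t‖ ^ 2)) :
    hypDist w t = hypDist w s := by
  have hw' : 0 < 1 - ‖w‖ ^ 2 := by nlinarith [norm_nonneg w]
  have ht' : 0 < 1 - ‖t‖ ^ 2 := by nlinarith [norm_nonneg t]
  have hs' : 0 < 1 - ‖s‖ ^ 2 := by nlinarith [norm_nonneg s]
  rw [hypDist, hypDist]
  congr 2
  rw [div_eq_div_iff (by positivity) (by positivity)]
  refine (sq_eq_sq₀ (by positivity) (by positivity)).1 ?_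
  rw [mul_pow, mul_pow, Real.sq_sqrt (by positivity), Real.sq_sqrt (by positivity)]
  linear_combination (1 - ‖w‖ ^ 2) * h

theorem hypDist_chordMeet_eq_of_collinear {x y z u t s : ℂ} (hord : PosOrderOnCircle x y z u)
    (hxy_zu : x * y ≠ z * u) (hxz_yu : x * z ≠ y * u) (hxu_yz : x * u ≠ y * z)
    (hW : ‖chordMeet x z y u‖ < 1) (ht : ‖t‖ < 1) (hs : ‖s‖ < 1)
    (htVW : Collinear ℝ ({chordMeet x u y z, chordMeet x z y u, t} : Set ℂ))
    (htxy : Collinear ℝ ({x, y, t} : Set ℂ))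
    (hsVW : Collinear ℝ ({chordMeet x u y z, chordMeet x z y u, s} : Set ℂ))
    (hszu : Collinear ℝ ({z, u, s} : Set ℂ)) :
    hypDist (chordMeet x z y u) t = hypDist (chordMeet x z y u) s := by
  obtain ⟨hx, hy, hz, hu⟩ := hord.norm_eq_one_s17
  obtain ⟨hxy, hxz, -, -, hyu, hzu⟩ := hord.pairwise_ne
  have hpolar : ∀ {p : ℂ}, Collinear ℝ ({chordMeet x u y z, chordMeet x z y u, p} : Set ℂ) →
      OnPolar (chordMeet x y z u) p :=
    onPolar_of_collinear_chordMeet hx hy hz hu hxy hzu hxy_zu hxz_yu hxu_yz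
  have hts := normSq_chordMeet_sub_mul hx hy hz hu hxy_zu hxz_yu hord.denom_ne_zero
    (add_mul_conj_eq_of_collinear hx hy hxy htxy) (hpolar htVW)
  have hst := normSq_chordMeet_sub_mul hz hu hx hy hxy_zu.symm (by rwa [mul_comm z, mul_comm u])
    hord.rotate.rotate.denom_ne_zero (add_mul_conj_eq_of_collinear hz hu hzu hszu)
    (by rw [chordMeet_comm]; exact hpolar hsVW)
  rw [chordMeet_swap_left, chordMeet_swap_right] at hst
  have hM : (x * z - y * u) ^ 2 * ((x - z) * (y - u)) ≠ 0 := by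
    simp [sub_eq_zero, hxz_yu, hxz, hyu]
  have key : ((normSq (chordMeet x z y u - t) * (1 - normSq s) : ℝ) : ℂ) *
      ((x * z - y * u) ^ 2 * ((x - z) * (y - u))) =
      ((normSq (chordMeet x z y u - s) * (1 - normSq t) : ℝ) : ℂ) *
      ((x * z - y * u) ^ 2 * ((x - z) * (y - u))) := by
    push_cast
    linear_combination (1 - (normSq s : ℂ)) * hts - (1 - (normSq t : ℂ)) * hst
  refine hypDist_eq_hypDist hW ht hs ?_
  simp only [Complex.sq_norm]
  exact_mod_cast mul_right_cancel₀ hM key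

/-- The point `w2` is hyperbolically equidistant from `t1` and `t3`, and from `t2`
and `t4`, where `t1 = L[w3,w2] ∩ L[a,b]`, `t2 = L[w1,w2] ∩ L[b,c]`,
`t3 = L[w3,w2] ∩ L[c,d]`, `t4 = L[w1,w2] ∩ L[a,d]`. -/
theorem w2_hyperbolically_equidistant (a b c d t1 t2 t3 t4 : ℂ)
    (hord : PosOrderOnCircle a b c d)
    (h1 : a * b ≠ c * d) (h3 : a * d ≠ b * c) (h2 : a * c ≠ b * d)
    (hw2lt : ‖(a * c * (b + d) - b * d * (a + c)) / (a * c - b * d)‖ < 1) :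
    let w1 := (a * b * (c + d) - c * d * (a + b)) / (a * b - c * d)
    let w3 := (a * d * (b + c) - b * c * (a + d)) / (a * d - b * c)
    let w2 := (a * c * (b + d) - b * d * (a + c)) / (a * c - b * d)
    ‖t1‖ < 1 → Collinear ℝ ({w3, w2, t1} : Set ℂ) →
      Collinear ℝ ({a, b, t1} : Set ℂ) →
    ‖t2‖ < 1 → Collinear ℝ ({w1, w2, t2} : Set ℂ) →
      Collinear ℝ ({b, c, t2} : Set ℂ) →
    ‖t3‖ < 1 → Collinear ℝ ({w3, w2, t3} : Set ℂ) →
      Collinear ℝ ({c, d, t3} : Set ℂ) →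
    ‖t4‖ < 1 → Collinear ℝ ({w1, w2, t4} : Set ℂ) →
      Collinear ℝ ({a, d, t4} : Set ℂ) →
    hypDist w2 t1 = hypDist w2 t3 ∧ hypDist w2 t2 = hypDist w2 t4 := by
  intro w1 w3 w2 ht1 ht1VW ht1ab ht2 ht2VW ht2bc ht3 ht3VW ht3cd ht4 ht4VW ht4ad
  have hw1 : chordMeet b a c d = w1 := chordMeet_swap_left a b c d
  have hw2 : chordMeet b d c a = w2 :=
    (chordMeet_comm c a b d).trans (chordMeet_swap_left a c b d)
  refine ⟨hypDist_chordMeet_eq_of_collinear hord h1 h2 h3 hw2lt ht1 ht3 ht1VW ht1ab ht3VW ht3cd,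
    ?_⟩
  rw [← hw2]
  refine hypDist_chordMeet_eq_of_collinear hord.rotate (by rwa [ne_comm, mul_comm d])
    (by rwa [ne_comm, mul_comm c]) (by rwa [mul_comm b]) (hw2 ▸ hw2lt) ht2 ht4
    (by rwa [hw1, hw2]) ht2bc (by rwa [hw1, hw2]) (by rwa [Set.insert_comm])
end
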